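/- Let a ∈ ℕ^m and b ∈ ℕ^n be margins with positive entries and equal total sum N = a_1+⋯+a_m = b_1+⋯+b_n, and let W be the m×n matrix with entries W_{ij} = a_i·b_j/N. Then g(W) ≥ log G(a,b). -/

import Mathlib

open Real Filter Topology

/-- The function `f(x) = (x+1) log(x+1) - x log x` (note `Real.log 0 = 0`). -/
noncomputable def f (x : ℝ) : ℝ := (x + 1) * Real.log (x + 1) - x * Real.log x

/-- `g(X) = ∑_{i,j} f(X_{ij})`. -/
noncomputable def g {m n : ℕ} (X : Matrix (Fin m) (Fin n) ℝ) : ℝ :=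
  ∑ i, ∑ j, f (X i j)

/-- Contingency tables with row margins `a` and column margins `b`. -/
def contTables {m n : ℕ} (a : Fin m → ℕ) (b : Fin n → ℕ) :
    Set (Matrix (Fin m) (Fin n) ℕ) :=
  {X | (∀ i, ∑ j, X i j = a i) ∧ (∀ j, ∑ i, X i j = b j)}

/-- `T(a,b)`: the number of contingency tables with margins `(a,b)`. -/
noncomputable def T {m n : ℕ} (a : Fin m → ℕ) (b : Fin n → ℕ) : ℕ :=
  (contTables a b).ncard

/-- `G(a,b)`: the independence-heuristic estimate. -/
noncomputable def G {m n : ℕ} (a : Fin m → ℕ) (b : Fin n → ℕ) : ℝ :=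
  (((∑ i, a i) + m * n - 1).choose (m * n - 1) : ℝ)⁻¹ *
    (∏ i, (((a i) + n - 1).choose (n - 1) : ℝ)) *
    (∏ j, (((b j) + m - 1).choose (m - 1) : ℝ))

/-- The transportation polytope `P(a,b)` of real nonnegative matrices with the
given row and column sums. -/
def transPoly {m n : ℕ} (a : Fin m → ℕ) (b : Fin n → ℕ) :
    Set (Matrix (Fin m) (Fin n) ℝ) :=
  {X | (∀ i j, 0 ≤ X i j) ∧ (∀ i, ∑ j, X i j = a i) ∧ (∀ j, ∑ i, X i j = b j)}

/-- `Z` is a typical table for margins `(a,b)`: it maximizes `g` over `P(a,b)`. -/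
def IsTypical {m n : ℕ} (a : Fin m → ℕ) (b : Fin n → ℕ)
    (Z : Matrix (Fin m) (Fin n) ℝ) : Prop :=
  Z ∈ transPoly a b ∧ ∀ X ∈ transPoly a b, g X ≤ g Z

/-- `k = ⌊n^δ⌋`. -/
noncomputable def bk (n : ℕ) (δ : ℝ) : ℕ := ⌊(n : ℝ) ^ δ⌋₊

/-- Barvinok margins: `⌊n^δ⌋` entries equal to `⌊BCn⌋` followed by `n` entries
equal to `⌊Cn⌋`. -/
noncomputable def bMargin (n : ℕ) (δ B C : ℝ) : Fin (bk n δ + n) → ℕ :=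
  fun i => if (i : ℕ) < bk n δ then ⌊B * C * n⌋₊ else ⌊C * n⌋₊

/-- `T_{n,δ}(B,C)`. -/
noncomputable def Tnd (n : ℕ) (δ B C : ℝ) : ℕ :=
  T (bMargin n δ B C) (bMargin n δ B C)

/-- `G_{n,δ}(B,C)`. -/
noncomputable def Gnd (n : ℕ) (δ B C : ℝ) : ℝ :=
  G (bMargin n δ B C) (bMargin n δ B C)

/-!
Write `C(p, q) = (p + q - 1).choose (q - 1)`, so that
`log G(a,b) = ∑ log C(a_i, n) + ∑ log C(b_j, m) - log C(N, mn)`. In the binomial expansion of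
`(p + q) ^ (p + q)` the term `(p + q).choose q * p ^ p * q ^ q` is the largest one and its two
neighbours are at least half of it; this pins `log C(p, q)` between
`q f(p/q) + log (q / ((p + q) (p + q + 1)))` and `q f(p/q) + log (q / (2 (p + q)))`, and since
`∏ (a_i + n) ≥ n ^ (m - 1) (N + n)` the logarithmic error terms add up to something nonpositive.
What is left, `∑ n f(a_i/n) + ∑ m f(b_j/m) ≤ mn f(N/mn) + g(W)`, is Jensen's inequality over the
rows for `x ↦ ∑_j f(x b_j / N) - n f(x / n)`, which is convex because `f'' = -1/(x(x+1))` and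
`t ↦ t / (xt + 1)` is concave.
-/

open Real Finset

def binomTerm (x y M j : ℕ) : ℕ := M.choose j * x ^ j * y ^ (M - j)

lemma sum_binomTerm (x y M : ℕ) : ∑ j ∈ range (M + 1), binomTerm x y M j = (x + y) ^ M := by
  rw [add_pow]
  exact sum_congr rfl fun j _ => by simp only [binomTerm, Nat.cast_id]; ring

lemma succ_mul_mul_binomTerm_succ (x y M j : ℕ) :
    (j + 1) * y * binomTerm x y M (j + 1) = (M - j) * x * binomTerm x y M j := by
  rcases lt_or_ge j M with hj | hj
  · have hy : y ^ (M - j) = y * y ^ (M - (j + 1)) := by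
      rw [← pow_succ']; congr 1; omega
    calc (j + 1) * y * binomTerm x y M (j + 1)
        = M.choose (j + 1) * (j + 1) * x ^ (j + 1) * (y * y ^ (M - (j + 1))) := by
          simp only [binomTerm]; ring
      _ = (M - j) * x * binomTerm x y M j := by
          rw [Nat.choose_succ_right_eq, ← hy, binomTerm]; ring
  · simp [binomTerm, Nat.choose_eq_zero_of_lt (Nat.lt_succ_of_le hj), Nat.sub_eq_zero_of_le hj]

/-- Each neighbour of the central term is at least half of it. -/
lemma two_mul_choose_mul_pow_mul_pow_le {p q : ℕ} (hp : 0 < p) (hq : 0 < q) :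
    2 * ((p + q).choose p * p ^ p * q ^ q) ≤ (p + q) ^ (p + q) := by
  set t := binomTerm p q (p + q)
  have hcenter : t p = (p + q).choose p * p ^ p * q ^ q := by
    simp only [t, binomTerm, Nat.add_sub_cancel_left]
  have hleft : t p ≤ 2 * t (p - 1) := by
    have h := succ_mul_mul_binomTerm_succ p q (p + q) (p - 1)
    rw [Nat.sub_add_cancel hp, show p + q - (p - 1) = q + 1 by omega] at h
    have : q * t p = (q + 1) * t (p - 1) := by
      apply Nat.eq_of_mul_eq_mul_left hp; linarith
    nlinarith
  have hright : t p ≤ 2 * t (p + 1) := by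
    have h := succ_mul_mul_binomTerm_succ p q (p + q) p
    rw [Nat.add_sub_cancel_left] at h
    have : (p + 1) * t (p + 1) = p * t p := by
      apply Nat.eq_of_mul_eq_mul_left hq; linarith
    nlinarith
  have hsub : ({p - 1, p, p + 1} : Finset ℕ) ⊆ range (p + q + 1) := by
    intro j hj; simp only [mem_insert, mem_singleton] at hj; simp only [mem_range]; omega
  calc 2 * ((p + q).choose p * p ^ p * q ^ q) ≤ t (p - 1) + (t p + t (p + 1)) := by omega
    _ = ∑ j ∈ {p - 1, p, p + 1}, t j := by
        rw [sum_insert (by simp; omega), sum_insert (by simp), sum_singleton]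
    _ ≤ ∑ j ∈ range (p + q + 1), t j := sum_le_sum_of_subset hsub
    _ = (p + q) ^ (p + q) := sum_binomTerm p q (p + q)

/-- The terms of the expansion of `(q + N) ^ (N + q)` increase up to `j = q` and decrease after. -/
lemma pow_le_succ_mul_choose_mul_pow_mul_pow {N : ℕ} (q : ℕ) (hN : 0 < N) :
    (N + q) ^ (N + q) ≤ (N + q + 1) * ((N + q).choose q * q ^ q * N ^ N) := by
  set t := binomTerm q N (N + q)
  have hstep := succ_mul_mul_binomTerm_succ q N (N + q)
  have hup : MonotoneOn t (Set.Iic q) := by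
    refine monotoneOn_of_le_succ Set.ordConnected_Iic fun j _ _ hj => ?_
    rw [Order.succ_eq_add_one, Set.mem_Iic] at hj
    have h : (j + 1) * N ≤ (N + q - j) * q :=
      (Nat.mul_le_mul hj (by omega : N ≤ N + q - j)).trans_eq (mul_comm _ _)
    refine Nat.le_of_mul_le_mul_left ?_ (by positivity : 0 < (j + 1) * N)
    rw [Order.succ_eq_add_one, hstep]; exact Nat.mul_le_mul_right _ h
  have hdown : AntitoneOn t {j | q ≤ j} := by
    refine antitoneOn_nat_Ici_of_succ_le fun j hj => ?_
    have h : (N + q - j) * q ≤ (j + 1) * N :=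
      (Nat.mul_le_mul (by omega : N + q - j ≤ N) (by omega : q ≤ j + 1)).trans_eq (mul_comm _ _)
    refine Nat.le_of_mul_le_mul_left ?_ (by positivity : 0 < (j + 1) * N)
    rw [hstep]; exact Nat.mul_le_mul_right _ h
  have hmax : ∀ j, t j ≤ t q := fun j => by
    rcases le_total j q with h | h
    · exact hup h Set.self_mem_Iic h
    · exact hdown (le_refl q) h h
  have hcenter : t q = (N + q).choose q * q ^ q * N ^ N := by
    simp only [t, binomTerm, Nat.add_sub_cancel]
  calc (N + q) ^ (N + q) = ∑ j ∈ range (N + q + 1), t j := by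
        rw [sum_binomTerm, add_comm q]
    _ ≤ ∑ _j ∈ range (N + q + 1), t q := sum_le_sum fun j _ => hmax j
    _ = (N + q + 1) * ((N + q).choose q * q ^ q * N ^ N) := by
        rw [sum_const, card_range, smul_eq_mul, hcenter]

lemma mul_f_div (p q : ℝ) (hp : 0 < p) (hq : 0 < q) :
    q * f (p / q) = (p + q) * log (p + q) - p * log p - q * log q := by
  have h : p / q + 1 = (p + q) / q := by field_simp
  rw [f, h, log_div (by positivity) hq.ne', log_div hp.ne' hq.ne']
  field_simp
  ring

lemma mul_f_div_eq_log (p q : ℕ) (hp : 0 < p) (hq : 0 < q) :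
    (q : ℝ) * f (p / q) = log ((p + q : ℝ) ^ (p + q) / ((p : ℝ) ^ p * (q : ℝ) ^ q)) := by
  have hp' : (0 : ℝ) < p := by exact_mod_cast hp
  have hq' : (0 : ℝ) < q := by exact_mod_cast hq
  rw [mul_f_div _ _ hp' hq', log_div (by positivity) (by positivity),
    log_mul (by positivity) (by positivity), log_pow, log_pow, log_pow]
  push_cast
  ring

lemma add_mul_choose_pred (p q : ℕ) (hq : 0 < q) :
    (p + q) * (p + q - 1).choose (q - 1) = q * (p + q).choose q := by
  obtain ⟨k, rfl⟩ := Nat.exists_eq_add_one_of_ne_zero hq.ne'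
  rw [← add_assoc, Nat.add_sub_cancel, Nat.add_sub_cancel, Nat.add_one_mul_choose_eq, mul_comm]

lemma log_choose_le {p q : ℕ} (hp : 0 < p) (hq : 0 < q) :
    log ((p + q - 1).choose (q - 1) : ℝ) ≤
      q * f (p / q) + log (q / (2 * (p + q))) := by
  have hnat : 2 * (p + q) * (p + q - 1).choose (q - 1) * (p ^ p * q ^ q) ≤
      q * (p + q) ^ (p + q) := by
    have h := two_mul_choose_mul_pow_mul_pow_le hp hq
    rw [Nat.choose_symm_add] at h
    calc 2 * (p + q) * (p + q - 1).choose (q - 1) * (p ^ p * q ^ q)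
        = q * (2 * ((p + q).choose q * p ^ p * q ^ q)) := by
          rw [mul_assoc 2, add_mul_choose_pred p q hq]; ring
      _ ≤ q * (p + q) ^ (p + q) := Nat.mul_le_mul_left q h
  have hp' : (0 : ℝ) < p := by exact_mod_cast hp
  have hq' : (0 : ℝ) < q := by exact_mod_cast hq
  have hC : (0 : ℝ) < (p + q - 1).choose (q - 1) := by exact_mod_cast Nat.choose_pos (by omega)
  rw [mul_f_div_eq_log p q hp hq, ← log_mul (by positivity) (by positivity)]
  refine log_le_log hC ?_
  have hR : (2 * (p + q) * (p + q - 1).choose (q - 1) * (p ^ p * q ^ q) : ℝ) ≤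
      q * (p + q) ^ (p + q) := by exact_mod_cast hnat
  rw [div_mul_div_comm, le_div_iff₀ (by positivity)]
  linarith

lemma le_log_choose {N q : ℕ} (hN : 0 < N) (hq : 0 < q) :
    q * f (N / q) + log (q / ((N + q) * (N + q + 1))) ≤
      log ((N + q - 1).choose (q - 1) : ℝ) := by
  have hnat : q * (N + q) ^ (N + q) ≤
      (N + q) * (N + q + 1) * (N + q - 1).choose (q - 1) * (N ^ N * q ^ q) := by
    calc q * (N + q) ^ (N + q)
        ≤ q * ((N + q + 1) * ((N + q).choose q * q ^ q * N ^ N)) :=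
          Nat.mul_le_mul_left q (pow_le_succ_mul_choose_mul_pow_mul_pow q hN)
      _ = (N + q) * (N + q + 1) * (N + q - 1).choose (q - 1) * (N ^ N * q ^ q) := by
          rw [mul_comm (N + q), mul_assoc (N + q + 1), add_mul_choose_pred N q hq]; ring
  have hN' : (0 : ℝ) < N := by exact_mod_cast hN
  have hq' : (0 : ℝ) < q := by exact_mod_cast hq
  rw [mul_f_div_eq_log N q hN hq, ← log_mul (by positivity) (by positivity)]
  refine log_le_log (by positivity) ?_
  have hR : (q * (N + q) ^ (N + q) : ℝ) ≤
      (N + q) * (N + q + 1) * (N + q - 1).choose (q - 1) * (N ^ N * q ^ q) := by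
    exact_mod_cast hnat
  rw [div_mul_div_comm, div_le_iff₀ (by positivity)]
  linarith

lemma hasDerivAt_f {x : ℝ} (hx : 0 < x) : HasDerivAt f (log (x + 1) - log x) x := by
  have h1 : HasDerivAt (fun y : ℝ => y + 1) 1 x := (hasDerivAt_id' x).add_const 1
  have h := (h1.fun_mul (h1.log (by positivity))).fun_sub
    ((hasDerivAt_id' x).fun_mul (hasDerivAt_log hx.ne'))
  exact h.congr_deriv (by field_simp; ring)

lemma hasDerivAt_log_add_one_sub_log {x : ℝ} (hx : 0 < x) :
    HasDerivAt (fun y => log (y + 1) - log y) ((x + 1)⁻¹ - x⁻¹) x := by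
  have h := (((hasDerivAt_id x).add_const 1).log (by positivity)).fun_sub (hasDerivAt_log hx.ne')
  simpa using h

/-- Tangent line of the concave function `c ↦ c / (x c + 1)` at `c = 1 / n`. -/
lemma div_mul_add_one_le_tangent {x c n : ℝ} (hx : 0 ≤ x) (hc : 0 ≤ c) (hn : 0 < n) :
    c / (x * c + 1) ≤ (x + n ^ 2 * c) / (x + n) ^ 2 := by
  rw [div_le_div_iff₀ (by positivity) (by positivity)]
  nlinarith [mul_nonneg hx (sq_nonneg (n * c - 1))]

lemma natCast_pos_of_sum_eq_one {n : ℕ} {c : Fin n → ℝ} (hsc : ∑ j, c j = 1) : (0 : ℝ) < n :=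
  Nat.cast_pos.2 <| Fin.pos_iff_nonempty.2 <| univ_nonempty_iff.1 <|
    nonempty_of_sum_ne_zero (hsc ▸ one_ne_zero)

lemma sum_div_mul_add_one_le {n : ℕ} {c : Fin n → ℝ} (hc : ∀ j, 0 ≤ c j) (hsc : ∑ j, c j = 1)
    {x : ℝ} (hx : 0 ≤ x) : ∑ j, c j / (x * c j + 1) ≤ n / (x + n) := by
  have hn := natCast_pos_of_sum_eq_one hsc
  calc ∑ j, c j / (x * c j + 1) ≤ ∑ j, (x + n ^ 2 * c j) / (x + n) ^ 2 :=
        sum_le_sum fun j _ => div_mul_add_one_le_tangent hx (hc j) hn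
    _ = n / (x + n) := by
        rw [← sum_div, sum_add_distrib, ← mul_sum, hsc, sum_const, card_univ, Fintype.card_fin,
          nsmul_eq_mul]
        field_simp

section JensenGap

variable {n : ℕ} {c : Fin n → ℝ}

lemma hasDerivAt_sum_f_mul_sub_mul_f_div (hc : ∀ j, 0 < c j) (hn : (0 : ℝ) < n) {x : ℝ}
    (hx : 0 < x) :
    HasDerivAt (fun x => ∑ j, f (x * c j) - n * f (x / n))
      (∑ j, c j * (log (x * c j + 1) - log (x * c j)) - (log (x / n + 1) - log (x / n))) x := by
  have hsum := HasDerivAt.fun_sum (u := univ) fun j _ =>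
    ((hasDerivAt_f (mul_pos hx (hc j))).comp x
      ((hasDerivAt_id' x).mul_const (c j))).congr_deriv (mul_comm _ _)
  have hdiv := ((hasDerivAt_f (div_pos hx hn)).comp x
    ((hasDerivAt_id' x).div_const (n : ℝ))).const_mul (n : ℝ)
  refine (hsum.fun_sub hdiv).congr_deriv ?_
  simp only [one_mul]
  congr 1
  field_simp

lemma hasDerivAt_sum_mul_log_sub (hc : ∀ j, 0 < c j) (hn : (0 : ℝ) < n) {x : ℝ} (hx : 0 < x) :
    HasDerivAt
      (fun x => ∑ j, c j * (log (x * c j + 1) - log (x * c j)) - (log (x / n + 1) - log (x / n)))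
      ((n / (x + n) - ∑ j, c j / (x * c j + 1)) / x) x := by
  have hterm : ∀ j, HasDerivAt (fun y => c j * (log (y * c j + 1) - log (y * c j)))
      (-(c j / (x * c j + 1)) / x) x := fun j => by
    have h := (hasDerivAt_log_add_one_sub_log (mul_pos hx (hc j))).comp x
      ((hasDerivAt_id' x).mul_const (c j))
    have := hc j
    exact (h.const_mul (c j)).congr_deriv (by field_simp; ring)
  have hdiv := (hasDerivAt_log_add_one_sub_log (div_pos hx hn)).comp x
    ((hasDerivAt_id' x).div_const (n : ℝ))
  refine ((HasDerivAt.fun_sum fun j _ => hterm j).fun_sub hdiv).congr_deriv ?_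
  rw [← sum_div, sum_neg_distrib]
  generalize ∑ j, c j / (x * c j + 1) = S
  field_simp
  ring

lemma convexOn_sum_f_mul_sub_mul_f_div (hc : ∀ j, 0 < c j) (hsc : ∑ j, c j = 1) :
    ConvexOn ℝ (Set.Ioi 0) (fun x => ∑ j, f (x * c j) - n * f (x / n)) := by
  have hn := natCast_pos_of_sum_eq_one hsc
  exact convexOn_of_hasDerivWithinAt2_nonneg (convex_Ioi 0)
    (fun x hx => (hasDerivAt_sum_f_mul_sub_mul_f_div hc hn hx).continuousAt.continuousWithinAt)
    (fun x hx => (hasDerivAt_sum_f_mul_sub_mul_f_div hc hn (interior_subset hx)).hasDerivWithinAt)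
    (fun x hx => (hasDerivAt_sum_mul_log_sub hc hn (interior_subset hx)).hasDerivWithinAt)
    (fun x hx => div_nonneg (sub_nonneg.2 <|
      sum_div_mul_add_one_le (fun j => (hc j).le) hsc (le_of_lt (interior_subset hx)))
      (le_of_lt (interior_subset hx)))

end JensenGap

-- Jensen over the rows for the convex function above, with `c = b / N`.
lemma sum_mul_f_div_add_sum_mul_f_div_le {m n : ℕ} {a : Fin m → ℝ} {b : Fin n → ℝ}
    (ha : ∀ i, 0 < a i) (hb : ∀ j, 0 < b j) (hab : ∑ i, a i = ∑ j, b j) (hm : 0 < m) :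
    ∑ i, n * f (a i / n) + ∑ j, m * f (b j / m) ≤
      m * n * f ((∑ i, a i) / (m * n)) + ∑ i, ∑ j, f (a i * b j / ∑ i, a i) := by
  set N := ∑ i, a i with hN_def
  have hN : 0 < N := sum_pos (fun i _ => ha i) (univ_nonempty_iff.2 ⟨⟨0, hm⟩⟩)
  have hm' : (0 : ℝ) < m := by exact_mod_cast hm
  have hsc : ∑ j, b j / N = 1 := by rw [← sum_div, ← hab, div_self hN.ne']
  have hjensen := (convexOn_sum_f_mul_sub_mul_f_div (fun j => div_pos (hb j) hN) hsc).map_sum_le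
    (t := univ) (w := fun _ => (m : ℝ)⁻¹) (p := a) (fun _ _ => by positivity)
    (by simp [hm'.ne']) (fun i _ => ha i)
  simp only [smul_eq_mul, ← mul_sum, ← hN_def] at hjensen
  have hrow : ∀ j, (m : ℝ)⁻¹ * N * (b j / N) = b j / m := fun j => by field_simp
  have htotal : (m : ℝ)⁻¹ * N / n = N / (m * n) := by field_simp
  have hcell : ∀ i j, a i * (b j / N) = a i * b j / N := fun i j => by ring
  simp only [hrow, htotal, hcell] at hjensen
  rw [sum_sub_distrib, ← mul_le_mul_iff_of_pos_left hm', mul_inv_cancel_left₀ hm'.ne',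
    mul_sub, mul_sum] at hjensen
  linarith

lemma pow_card_mul_sum_add_le_mul_prod_add {ι : Type*} (s : Finset ι) (a : ι → ℕ) (n : ℕ) :
    n ^ #s * (∑ i ∈ s, a i + n) ≤ n * ∏ i ∈ s, (a i + n) := by
  induction s using Finset.cons_induction with
  | empty => simp
  | cons i s hi ih =>
    rw [card_cons, sum_cons, prod_cons]
    have hstep : n * (a i + ∑ j ∈ s, a j + n) ≤ (a i + n) * (∑ j ∈ s, a j + n) := by
      nlinarith [Nat.zero_le (a i * ∑ j ∈ s, a j)]
    calc n ^ (#s + 1) * (a i + ∑ j ∈ s, a j + n)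
        = n ^ #s * (n * (a i + ∑ j ∈ s, a j + n)) := by ring
      _ ≤ n ^ #s * ((a i + n) * (∑ j ∈ s, a j + n)) := Nat.mul_le_mul_left _ hstep
      _ = (a i + n) * (n ^ #s * (∑ j ∈ s, a j + n)) := by ring
      _ ≤ (a i + n) * (n * ∏ j ∈ s, (a j + n)) := Nat.mul_le_mul_left _ ih
      _ = n * ((a i + n) * ∏ j ∈ s, (a j + n)) := by ring

lemma add_mul_mul_add_mul_add_one_le {m : ℕ} (n N : ℕ) (hm : 0 < m) :
    (N + m * n) * (N + m * n + 1) ≤ 2 ^ (m + n) * ((N + n) * (N + m)) := by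
  calc (N + m * n) * (N + m * n + 1) ≤ (m * (N + n)) * ((n + 1) * (N + m)) :=
        Nat.mul_le_mul (by nlinarith) (by nlinarith)
    _ = (m * (n + 1)) * ((N + n) * (N + m)) := by ring
    _ ≤ 2 ^ (m + n) * ((N + n) * (N + m)) := by
        rw [pow_add]
        exact Nat.mul_le_mul_right _ (Nat.mul_le_mul Nat.lt_two_pow_self.le Nat.lt_two_pow_self)

lemma sum_log_div_add_sum_log_div_le {m n N : ℕ} {a : Fin m → ℕ} {b : Fin n → ℕ}
    (hm : 0 < m) (hn : 0 < n) (ha : ∑ i, a i = N) (hb : ∑ j, b j = N) :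
    ∑ i, log (n / (2 * (a i + n)) : ℝ) + ∑ j, log (m / (2 * (b j + m)) : ℝ) ≤
      log (((m * n : ℕ) : ℝ) / ((N + (m * n : ℕ)) * (N + (m * n : ℕ) + 1))) := by
  have hnat : n ^ m * m ^ n * ((N + m * n) * (N + m * n + 1)) ≤
      2 ^ (m + n) * (m * n) * ((∏ i, (a i + n)) * ∏ j, (b j + m)) := by
    have hrows := pow_card_mul_sum_add_le_mul_prod_add univ a n
    have hcols := pow_card_mul_sum_add_le_mul_prod_add univ b m
    rw [card_univ, Fintype.card_fin, ha] at hrows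
    rw [card_univ, Fintype.card_fin, hb] at hcols
    calc n ^ m * m ^ n * ((N + m * n) * (N + m * n + 1))
        ≤ n ^ m * m ^ n * (2 ^ (m + n) * ((N + n) * (N + m))) :=
          Nat.mul_le_mul_left _ (add_mul_mul_add_mul_add_one_le n N hm)
      _ = 2 ^ (m + n) * ((n ^ m * (N + n)) * (m ^ n * (N + m))) := by ring
      _ ≤ 2 ^ (m + n) * ((n * ∏ i, (a i + n)) * (m * ∏ j, (b j + m))) :=
          Nat.mul_le_mul_left _ (Nat.mul_le_mul hrows hcols)
      _ = 2 ^ (m + n) * (m * n) * ((∏ i, (a i + n)) * ∏ j, (b j + m)) := by ring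
  have hn' : (0 : ℝ) < n := by exact_mod_cast hn
  have hm' : (0 : ℝ) < m := by exact_mod_cast hm
  rw [← log_prod (fun i _ => by positivity), ← log_prod (fun j _ => by positivity),
    ← log_mul (by positivity) (by positivity)]
  refine log_le_log (by positivity) ?_
  simp only [prod_div_distrib, prod_mul_distrib, prod_const, card_univ, Fintype.card_fin]
  rw [div_mul_div_comm, div_le_div_iff₀ (by positivity) (by positivity)]
  have hR : (n ^ m * m ^ n * ((N + m * n) * (N + m * n + 1)) : ℝ) ≤
      2 ^ (m + n) * (m * n) * ((∏ i, ((a i : ℝ) + n)) * ∏ j, ((b j : ℝ) + m)) := by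
    exact_mod_cast hnat
  push_cast
  rw [pow_add] at hR
  linarith

lemma log_G {m n : ℕ} (a : Fin m → ℕ) (b : Fin n → ℕ) :
    log (G a b) = ∑ i, log ((a i + n - 1).choose (n - 1) : ℝ) +
      ∑ j, log ((b j + m - 1).choose (m - 1) : ℝ) -
      log (((∑ i, a i) + m * n - 1).choose (m * n - 1) : ℝ) := by
  have hpos : ∀ p q : ℕ, ((p + q - 1).choose (q - 1) : ℝ) ≠ 0 := fun p q =>
    Nat.cast_ne_zero.2 (Nat.choose_pos (by omega)).ne'
  rw [G, log_mul (mul_ne_zero (inv_ne_zero (hpos _ _)) (prod_ne_zero_iff.2 fun i _ => hpos _ _))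
    (prod_ne_zero_iff.2 fun j _ => hpos _ _), log_mul (inv_ne_zero (hpos _ _))
    (prod_ne_zero_iff.2 fun i _ => hpos _ _), log_inv, log_prod fun i _ => hpos _ _,
    log_prod fun j _ => hpos _ _]
  ring

lemma sum_pos_iff_pos {k : ℕ} {c : Fin k → ℕ} (hc : ∀ i, 0 < c i) : 0 < ∑ i, c i ↔ 0 < k := by
  rcases k.eq_zero_or_pos with rfl | hk
  · simp
  · exact iff_of_true (sum_pos (fun i _ => hc i) (univ_nonempty_iff.2 ⟨⟨0, hk⟩⟩)) hk

/-- for the independence matrix `W_{ij} = a_i b_j / N`, we have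
`g(W) ≥ log G(a,b)`. -/
theorem statement14 (m n : ℕ) (a : Fin m → ℕ) (b : Fin n → ℕ)
    (ha : ∀ i, 0 < a i) (hb : ∀ j, 0 < b j)
    (hsum : (∑ i, a i) = (∑ j, b j)) :
    Real.log (G a b) ≤
      g (Matrix.of fun i j => (a i : ℝ) * (b j : ℝ) / ((∑ i, a i : ℕ) : ℝ)) := by
  rcases m.eq_zero_or_pos with rfl | hm
  · obtain rfl : n = 0 := by simpa [← hsum] using sum_pos_iff_pos hb
    simp [G, g]
  have hN : 0 < ∑ i, a i := (sum_pos_iff_pos ha).2 hm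
  have hn : 0 < n := (sum_pos_iff_pos hb).1 (hsum ▸ hN)
  have hrows := sum_le_sum fun i (_ : i ∈ univ) => log_choose_le (ha i) hn
  have hcols := sum_le_sum fun j (_ : j ∈ univ) => log_choose_le (hb j) hm
  have htotal := le_log_choose hN (Nat.mul_pos hm hn)
  have hcorr := sum_log_div_add_sum_log_div_le hm hn rfl hsum.symm
  have hjensen := sum_mul_f_div_add_sum_mul_f_div_le (a := fun i => (a i : ℝ))
    (b := fun j => (b j : ℝ)) (fun i => by exact_mod_cast ha i) (fun j => by exact_mod_cast hb j)
    (by exact_mod_cast hsum) hm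
  rw [sum_add_distrib] at hrows hcols
  push_cast at htotal hcorr hjensen ⊢
  rw [log_G, g]
  simp only [Matrix.of_apply]
  linarith
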